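/- arXiv:1405.0986 — 2 statements merged into one kernel-verified Lean document; each statement's English description precedes it below -/
import Mathlib

section
/- Let ρ be a separable bipartite density matrix on ℂ^{dA}⊗ℂ^{dB}, let A be a dA×dA complex matrix and B a dB×dB complex matrix. Then |Tr((A† ⊗ B)ρ)|² ≤ Re Tr((A†A ⊗ B†B)ρ). (This is the Hillery–Zubairy criterion, a special case of the Cauchy–Schwarz criterion with A₂ = 𝟙 and B₁ = 𝟙.) -/
/-!
For a product state `σ ⊗ τ` the trace factorises, and each factor obeys the Cauchy–Schwarz
inequality for the semi-inner product `⟪X, Y⟫ = Tr(X† Y σ)` on matrices (with `Y = 1` on the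
`A` side and `X = 1` on the `B` side). Mixing preserves the inequality: the left-hand side is
the squared norm of a linear functional of the state, hence convex, while the right-hand side
is linear.
-/

open Matrix
open scoped Kronecker ComplexOrder

noncomputable section

/-- A density matrix: a positive semidefinite complex matrix of trace 1. -/
def IsDensityMatrix {ι : Type*} [Fintype ι] (ρ : Matrix ι ι ℂ) : Prop :=
  ρ.PosSemidef ∧ ρ.trace = 1

/-- A bipartite state is separable if it is a finite convex combination of Kronecker
products of density matrices on the two factors. -/
def Separable {dA dB : ℕ}
    (ρ : Matrix (Fin dA × Fin dB) (Fin dA × Fin dB) ℂ) : Prop :=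
  ∃ (n : ℕ) (p : Fin n → ℝ) (ρA : Fin n → Matrix (Fin dA) (Fin dA) ℂ)
    (ρB : Fin n → Matrix (Fin dB) (Fin dB) ℂ),
    (∀ k, 0 ≤ p k) ∧ (∑ k, p k = 1) ∧
    (∀ k, IsDensityMatrix (ρA k)) ∧ (∀ k, IsDensityMatrix (ρB k)) ∧
    ρ = ∑ k, (p k : ℂ) • (ρA k ⊗ₖ ρB k)

theorem norm_sum_smul_sq_le {ι E : Type*} [SeminormedAddCommGroup E] [NormedSpace ℝ E]
    {s : Finset ι} {w : ι → ℝ} (hw₀ : ∀ i ∈ s, 0 ≤ w i) (hw₁ : ∑ i ∈ s, w i = 1) (z : ι → E) :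
    ‖∑ i ∈ s, w i • z i‖ ^ 2 ≤ ∑ i ∈ s, w i * ‖z i‖ ^ 2 := by
  simpa using ((convexOn_norm convex_univ).pow (fun _ _ => norm_nonneg _) 2).map_sum_le hw₀ hw₁
    fun i _ => Set.mem_univ (z i)

namespace Matrix.PosSemidef

variable {n 𝕜 : Type*} [Fintype n] [RCLike 𝕜] {σ : Matrix n n 𝕜}

theorem norm_trace_conjTranspose_mul_mul_sq_le (hσ : σ.PosSemidef) (X Y : Matrix n n 𝕜) :
    ‖(Xᴴ * Y * σ).trace‖ ^ 2 ≤
      RCLike.re (Xᴴ * X * σ).trace * RCLike.re (Yᴴ * Y * σ).trace := by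
  let := σ.toMatrixSeminormedAddCommGroup hσ
  let := σ.toMatrixInnerProductSpace hσ
  have inner_eq (U V : Matrix n n 𝕜) : inner 𝕜 U V = (Uᴴ * V * σ).trace :=
    trace_mul_cycle V σ Uᴴ
  have h := inner_mul_inner_self_le (𝕜 := 𝕜) X Y
  rwa [norm_inner_symm Y X, ← sq, inner_eq, inner_eq, inner_eq] at h

theorem trace_conjTranspose_mul_self_mul_nonneg (hσ : σ.PosSemidef) (X : Matrix n n 𝕜) :
    0 ≤ (Xᴴ * X * σ).trace := by
  rw [← trace_mul_cycle X σ Xᴴ]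
  exact (hσ.mul_mul_conjTranspose_same X).trace_nonneg

end Matrix.PosSemidef

namespace IsDensityMatrix

variable {ι : Type*} [Fintype ι] [DecidableEq ι] {σ : Matrix ι ι ℂ}

theorem norm_trace_conjTranspose_mul_sq_le (hσ : IsDensityMatrix σ) (A : Matrix ι ι ℂ) :
    ‖(Aᴴ * σ).trace‖ ^ 2 ≤ (Aᴴ * A * σ).trace.re := by
  simpa [hσ.2] using hσ.1.norm_trace_conjTranspose_mul_mul_sq_le A 1

theorem norm_trace_mul_sq_le (hσ : IsDensityMatrix σ) (B : Matrix ι ι ℂ) :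
    ‖(B * σ).trace‖ ^ 2 ≤ (Bᴴ * B * σ).trace.re := by
  simpa [hσ.2] using hσ.1.norm_trace_conjTranspose_mul_mul_sq_le 1 B

end IsDensityMatrix

theorem hillery_zubairy_kronecker {ιA ιB : Type*} [Fintype ιA] [DecidableEq ιA] [Fintype ιB]
    [DecidableEq ιB] {σ : Matrix ιA ιA ℂ} {τ : Matrix ιB ιB ℂ}
    (hσ : IsDensityMatrix σ) (hτ : IsDensityMatrix τ) (A : Matrix ιA ιA ℂ)
    (B : Matrix ιB ιB ℂ) :
    ‖((Aᴴ ⊗ₖ B) * (σ ⊗ₖ τ)).trace‖ ^ 2 ≤ (((Aᴴ * A) ⊗ₖ (Bᴴ * B)) * (σ ⊗ₖ τ)).trace.re := by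
  have hA_real : (Aᴴ * A * σ).trace.im = 0 :=
    (Complex.nonneg_iff.1 (hσ.1.trace_conjTranspose_mul_self_mul_nonneg A)).2.symm
  rw [← mul_kronecker_mul, ← mul_kronecker_mul, trace_kronecker, trace_kronecker, norm_mul,
    mul_pow, Complex.mul_re, hA_real, zero_mul, sub_zero]
  have hA := hσ.norm_trace_conjTranspose_mul_sq_le A
  exact mul_le_mul hA (hτ.norm_trace_mul_sq_le B) (sq_nonneg _) ((sq_nonneg _).trans hA)

theorem hillery_zubairy_criterion_general {dA dB : ℕ}
    (ρ : Matrix (Fin dA × Fin dB) (Fin dA × Fin dB) ℂ)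
    (hsep : Separable ρ)
    (A : Matrix (Fin dA) (Fin dA) ℂ) (B : Matrix (Fin dB) (Fin dB) ℂ) :
    ‖((Aᴴ ⊗ₖ B) * ρ).trace‖ ^ 2 ≤
      ((((Aᴴ * A) ⊗ₖ (Bᴴ * B)) * ρ).trace).re := by
  obtain ⟨n, p, ρA, ρB, hp₀, hp₁, hρA, hρB, rfl⟩ := hsep
  simp only [Complex.coe_smul, Matrix.mul_sum, Matrix.mul_smul, trace_sum, trace_smul,
    Complex.re_sum, Complex.smul_re]
  calc _ ≤ ∑ k, p k * ‖((Aᴴ ⊗ₖ B) * (ρA k ⊗ₖ ρB k)).trace‖ ^ 2 :=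
        norm_sum_smul_sq_le (fun k _ => hp₀ k) hp₁ _
    _ ≤ _ := Finset.sum_le_sum fun k _ =>
        mul_le_mul_of_nonneg_left (hillery_zubairy_kronecker (hρA k) (hρB k) A B) (hp₀ k)

/-- **The Hillery–Zubairy criterion (Eq. (46)).**  For every separable bipartite state,
`|⟨A† ⊗ B⟩|² ≤ ⟨A†A ⊗ B†B⟩`. -/
theorem hillery_zubairy_criterion {dA dB : ℕ}
    (ρ : Matrix (Fin dA × Fin dB) (Fin dA × Fin dB) ℂ)
    (hρ : IsDensityMatrix ρ) (hsep : Separable ρ)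
    (A : Matrix (Fin dA) (Fin dA) ℂ) (B : Matrix (Fin dB) (Fin dB) ℂ) :
    ‖((Aᴴ ⊗ₖ B) * ρ).trace‖ ^ 2 ≤
      ((((Aᴴ * A) ⊗ₖ (Bᴴ * B)) * ρ).trace).re :=
  hillery_zubairy_criterion_general ρ hsep A B
end
end

section
/- Let ρ be a fully separable three-qubit density matrix on ℂ²⊗ℂ²⊗ℂ², with entries indexed by the basis |000⟩,…,|111⟩. Then |ρ(000,111)|⁴ ≤ ρ(000,000)·ρ(011,011)·ρ(101,101)·ρ(110,110), where the diagonal entries on the right are nonnegative reals. -/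
/-!
Write `ρ = ∑ₖ pₖ Aₖ ⊗ Bₖ ⊗ Cₖ`. The entry `ρ(000,111)` is bounded termwise by
`pₖ |Aₖ(0,1)| |Bₖ(0,1)| |Cₖ(0,1)|`, and `|X(0,1)|² ≤ X(0,0) X(1,1)` for each positive semidefinite
factor because its `2 × 2` principal minors are nonnegative. The fourth power of the `k`-th bound is
therefore at most the product of the `k`-th summands of the four diagonal entries
`ρ(000,000), ρ(011,011), ρ(101,101), ρ(110,110)`, and a four-function Hölder inequality (Cauchy–Schwarz
applied twice) sums these termwise bounds.
-/

open Matrix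
open scoped Kronecker ComplexOrder

noncomputable section

def FullySeparable {dA dB dC : ℕ}
    (ρ : Matrix (Fin dA × Fin dB × Fin dC) (Fin dA × Fin dB × Fin dC) ℂ) : Prop :=
  ∃ (n : ℕ) (p : Fin n → ℝ) (ρA : Fin n → Matrix (Fin dA) (Fin dA) ℂ)
    (ρB : Fin n → Matrix (Fin dB) (Fin dB) ℂ) (ρC : Fin n → Matrix (Fin dC) (Fin dC) ℂ),
    (∀ k, 0 ≤ p k) ∧ (∑ k, p k = 1) ∧
    (∀ k, IsDensityMatrix (ρA k)) ∧ (∀ k, IsDensityMatrix (ρB k)) ∧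
    (∀ k, IsDensityMatrix (ρC k)) ∧
    ρ = ∑ k, (p k : ℂ) • (ρA k ⊗ₖ (ρB k ⊗ₖ ρC k))

namespace Matrix.PosSemidef

variable {n : Type*} {M : Matrix n n ℂ}

lemma re_apply_self_nonneg (hM : M.PosSemidef) (i : n) : 0 ≤ (M i i).re :=
  (Complex.nonneg_iff.mp hM.diag_nonneg).1

lemma ofReal_re_apply_self (hM : M.PosSemidef) (i : n) : ((M i i).re : ℂ) = M i i :=
  hM.isHermitian.coe_re_apply_self i

lemma norm_apply_sq_le (hM : M.PosSemidef) (i j : n) :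
    ‖M i j‖ ^ 2 ≤ (M i i).re * (M j j).re := by
  have hdet := (hM.submatrix ![i, j]).det_nonneg
  rw [det_fin_two] at hdet
  simp only [submatrix_apply, Matrix.cons_val_zero, Matrix.cons_val_one, sub_nonneg] at hdet
  rw [← hM.isHermitian.apply j i, Complex.star_def, Complex.mul_conj', ← hM.ofReal_re_apply_self i,
    ← hM.ofReal_re_apply_self j] at hdet
  exact_mod_cast hdet

end Matrix.PosSemidef

namespace Finset

variable {ι : Type*} (s : Finset ι) {f x y z w : ι → ℝ}

lemma sum_pow_four_le_sum_mul_sum_mul_sum_mul_sum (hx : ∀ i ∈ s, 0 ≤ x i)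
    (hy : ∀ i ∈ s, 0 ≤ y i) (hz : ∀ i ∈ s, 0 ≤ z i) (hw : ∀ i ∈ s, 0 ≤ w i)
    (hf : ∀ i ∈ s, f i ^ 4 ≤ x i * y i * z i * w i) :
    (∑ i ∈ s, f i) ^ 4 ≤ (∑ i ∈ s, x i) * (∑ i ∈ s, y i) * (∑ i ∈ s, z i) * ∑ i ∈ s, w i := by
  have hxy : (∑ i ∈ s, √(x i * y i)) ^ 2 ≤ (∑ i ∈ s, x i) * ∑ i ∈ s, y i :=
    sum_sq_le_sum_mul_sum_of_sq_le_mul s hx hy fun i hi ↦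
      (Real.sq_sqrt (mul_nonneg (hx i hi) (hy i hi))).le
  have hzw : (∑ i ∈ s, √(z i * w i)) ^ 2 ≤ (∑ i ∈ s, z i) * ∑ i ∈ s, w i :=
    sum_sq_le_sum_mul_sum_of_sq_le_mul s hz hw fun i hi ↦
      (Real.sq_sqrt (mul_nonneg (hz i hi) (hw i hi))).le
  have hf2 : (∑ i ∈ s, f i) ^ 2 ≤ (∑ i ∈ s, √(x i * y i)) * ∑ i ∈ s, √(z i * w i) :=
    sum_sq_le_sum_mul_sum_of_sq_le_mul s (fun _ _ ↦ Real.sqrt_nonneg _)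
      (fun _ _ ↦ Real.sqrt_nonneg _) fun i hi ↦ by
        have hxy := mul_nonneg (hx i hi) (hy i hi)
        rw [← Real.sqrt_mul hxy, Real.le_sqrt (sq_nonneg _)
          (mul_nonneg hxy (mul_nonneg (hz i hi) (hw i hi))), ← pow_mul, ← mul_assoc]
        exact hf i hi
  calc (∑ i ∈ s, f i) ^ 4 = ((∑ i ∈ s, f i) ^ 2) ^ 2 := by ring
    _ ≤ ((∑ i ∈ s, √(x i * y i)) * ∑ i ∈ s, √(z i * w i)) ^ 2 := by gcongr
    _ = (∑ i ∈ s, √(x i * y i)) ^ 2 * (∑ i ∈ s, √(z i * w i)) ^ 2 := mul_pow _ _ _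
    _ ≤ ((∑ i ∈ s, x i) * ∑ i ∈ s, y i) * ((∑ i ∈ s, z i) * ∑ i ∈ s, w i) :=
      mul_le_mul hxy hzw (sq_nonneg _) ((sq_nonneg _).trans hxy)
    _ = _ := by ring

end Finset

lemma Matrix.sum_smul_kronecker_kronecker_apply {ι α β γ : Type*} [Fintype ι] (p : ι → ℝ)
    (A : ι → Matrix α α ℂ) (B : ι → Matrix β β ℂ) (C : ι → Matrix γ γ ℂ)
    (i i' : α) (j j' : β) (l l' : γ) :
    (∑ k, (p k : ℂ) • (A k ⊗ₖ (B k ⊗ₖ C k))) (i, j, l) (i', j', l') =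
      ∑ k, p k * (A k i i' * (B k j j' * C k l l')) := by
  simp only [Matrix.sum_apply, Matrix.smul_apply, kroneckerMap_apply, smul_eq_mul]

theorem FullySeparable.norm_apply_pow_four_le {dA dB dC : ℕ}
    {ρ : Matrix (Fin dA × Fin dB × Fin dC) (Fin dA × Fin dB × Fin dC) ℂ}
    (hρ : FullySeparable ρ) (i i' : Fin dA) (j j' : Fin dB) (l l' : Fin dC) :
    ‖ρ (i, j, l) (i', j', l')‖ ^ 4 ≤
      (ρ (i, j, l) (i, j, l)).re * (ρ (i, j', l') (i, j', l')).re *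
      (ρ (i', j, l') (i', j, l')).re * (ρ (i', j', l) (i', j', l)).re := by
  obtain ⟨n, p, A, B, C, hp, -, hA, hB, hC, rfl⟩ := hρ
  replace hA k := (hA k).1
  replace hB k := (hB k).1
  replace hC k := (hC k).1
  have hdiag (a b c) : ((∑ k, (p k : ℂ) • (A k ⊗ₖ (B k ⊗ₖ C k))) (a, b, c) (a, b, c)).re =
      ∑ k, p k * ((A k a a).re * ((B k b b).re * (C k c c).re)) := by
    rw [Matrix.sum_smul_kronecker_kronecker_apply, Complex.re_sum]
    refine Finset.sum_congr rfl fun k _ ↦ ?_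
    rw [← (hA k).ofReal_re_apply_self, ← (hB k).ofReal_re_apply_self,
      ← (hC k).ofReal_re_apply_self]
    norm_cast
  have hnorm : ‖(∑ k, (p k : ℂ) • (A k ⊗ₖ (B k ⊗ₖ C k))) (i, j, l) (i', j', l')‖ ≤
      ∑ k, p k * (‖A k i i'‖ * (‖B k j j'‖ * ‖C k l l'‖)) := by
    rw [Matrix.sum_smul_kronecker_kronecker_apply]
    refine (norm_sum_le _ _).trans_eq (Finset.sum_congr rfl fun k _ ↦ ?_)
    rw [norm_mul, norm_mul, norm_mul, Complex.norm_real, Real.norm_of_nonneg (hp k)]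
  have hdiag_nonneg (a b c) : ∀ k ∈ Finset.univ,
      0 ≤ p k * ((A k a a).re * ((B k b b).re * (C k c c).re)) := fun k _ ↦
    mul_nonneg (hp k) (mul_nonneg ((hA k).re_apply_self_nonneg a)
      (mul_nonneg ((hB k).re_apply_self_nonneg b) ((hC k).re_apply_self_nonneg c)))
  rw [hdiag, hdiag, hdiag, hdiag]
  refine (pow_le_pow_left₀ (norm_nonneg _) hnorm 4).trans
    (Finset.sum_pow_four_le_sum_mul_sum_mul_sum_mul_sum _ (hdiag_nonneg _ _ _)
      (hdiag_nonneg _ _ _) (hdiag_nonneg _ _ _) (hdiag_nonneg _ _ _) fun k _ ↦ ?_)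
  have hAk := (hA k).norm_apply_sq_le i i'
  have hBk := (hB k).norm_apply_sq_le j j'
  have hCk := (hC k).norm_apply_sq_le l l'
  calc (p k * (‖A k i i'‖ * (‖B k j j'‖ * ‖C k l l'‖))) ^ 4
      = p k ^ 4 * ((‖A k i i'‖ ^ 2) ^ 2 * ((‖B k j j'‖ ^ 2) ^ 2 * (‖C k l l'‖ ^ 2) ^ 2)) := by
        ring
    _ ≤ p k ^ 4 * (((A k i i).re * (A k i' i').re) ^ 2 *
        (((B k j j).re * (B k j' j').re) ^ 2 * ((C k l l).re * (C k l' l').re) ^ 2)) := by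
        gcongr
    _ = _ := by ring

theorem fully_separable_matrix_entry_criterion4_general
    (ρ : Matrix (Fin 2 × Fin 2 × Fin 2) (Fin 2 × Fin 2 × Fin 2) ℂ)
    (hsep : FullySeparable ρ) :
    ‖ρ (0, 0, 0) (1, 1, 1)‖ ^ 4 ≤
      (ρ (0, 0, 0) (0, 0, 0)).re * (ρ (0, 1, 1) (0, 1, 1)).re *
      (ρ (1, 0, 1) (1, 0, 1)).re * (ρ (1, 1, 0) (1, 1, 0)).re :=
  hsep.norm_apply_pow_four_le 0 1 0 1 0 1

/-- **The matrix-entry criterion Eq. (62) of Gühne–Seevinck type.**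
For every fully separable three-qubit state:
`|ρ_{000,111}|⁴ ≤ ρ_{000,000} ρ_{011,011} ρ_{101,101} ρ_{110,110}`. -/
theorem fully_separable_matrix_entry_criterion4
    (ρ : Matrix (Fin 2 × Fin 2 × Fin 2) (Fin 2 × Fin 2 × Fin 2) ℂ)
    (hρ : IsDensityMatrix ρ) (hsep : FullySeparable ρ) :
    ‖ρ (0, 0, 0) (1, 1, 1)‖ ^ 4 ≤
      (ρ (0, 0, 0) (0, 0, 0)).re * (ρ (0, 1, 1) (0, 1, 1)).re *
      (ρ (1, 0, 1) (1, 0, 1)).re * (ρ (1, 1, 0) (1, 1, 0)).re :=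
  fully_separable_matrix_entry_criterion4_general ρ hsep
end
end
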